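/- arXiv:2003.04523 — 2 statements merged into one kernel-verified Lean document; each statement's English description precedes it below -/
import Mathlib

section
/- Let θ be a treegram over a nonempty finite set X and < a total order on X compatible with the birth times. Then the linearization F∘θ is isomorphic, as a functor ℝ → Vec_𝔽, to the direct sum ⊕_{x ∈ X} I^{[b(x), d^<(x))} of interval modules. (Consequently, for any ℝ-indexed filtration K of a connected finite simplicial complex with π₀(K) = θ, the zeroth persistent homology H₀(K) is isomorphic to this direct sum of interval modules.) -/
open CategoryTheory
open scoped Classical

universe u

section treegram

variable {X : Type u}

/-- A treegram over a finite set `X`: a monotone family of sub-partitions of `X`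
(collections of nonempty pairwise disjoint subsets of `X`, ordered by refinement),
which is eventually the single-block partition `{X}`, eventually empty in the other
direction, and locally constant to the right. -/
structure Treegram (X : Type u) where
  /-- the sub-partition at time `t` -/
  blocks : ℝ → Set (Set X)
  nonempty_of_mem : ∀ t : ℝ, ∀ B ∈ blocks t, B.Nonempty
  disjoint' : ∀ t : ℝ, ∀ B ∈ blocks t, ∀ C ∈ blocks t, B ≠ C → B ∩ C = ∅
  refines : ∀ ⦃s t : ℝ⦄, s ≤ t → ∀ B ∈ blocks s, ∃ C ∈ blocks t, B ⊆ C
  eventually_whole : ∃ T > (0 : ℝ),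
    (∀ t, T ≤ t → blocks t = {Set.univ}) ∧ (∀ t, t ≤ -T → blocks t = ∅)
  right_constant : ∀ t : ℝ, ∃ δ > (0 : ℝ), ∀ s, t ≤ s → s ≤ t + δ → blocks s = blocks t

/-- The birth time of `x`: the minimal `t` such that `x` lies in some block of the
sub-partition at time `t`. -/
noncomputable def birth (T : Treegram X) (x : X) : ℝ :=
  sInf {t : ℝ | ∃ B ∈ T.blocks t, x ∈ B}

lemma Treegram.eq_of_subset (T : Treegram X) {t : ℝ} {B C : Set X}
    (hB : B ∈ T.blocks t) (hC : C ∈ T.blocks t) (hsub : B ⊆ C) : B = C := by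
  by_contra hne
  have hdisj := T.disjoint' t B hB C hC hne
  obtain ⟨b, hb⟩ := T.nonempty_of_mem t B hB
  have hmem : b ∈ B ∩ C := ⟨hb, hsub hb⟩
  rw [hdisj] at hmem
  exact hmem

end treegram

section death

variable {X : Type u} [LinearOrder X]

/-- The death time of `x` (an extended real): the supremum of the times `t ≥ b(x)` at
which `x` is the `<`-least element of the block containing it. -/
noncomputable def death (T : Treegram X) (x : X) : EReal :=
  sSup {e : EReal | ∃ t : ℝ, e = (t : EReal) ∧ birth T x ≤ t ∧
    ∀ B ∈ T.blocks t, x ∈ B → ∀ y ∈ B, x ≤ y}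

end death

section linearization

variable {X : Type u} (𝔽 : Type u) [Field 𝔽]

/-- The map sending a block at time `s` to the block containing it at time `t ≥ s`. -/
noncomputable def blockMap (T : Treegram X) {s t : ℝ} (h : s ≤ t)
    (B : T.blocks s) : T.blocks t :=
  ⟨(T.refines h B.1 B.2).choose, (T.refines h B.1 B.2).choose_spec.1⟩

lemma blockMap_id (T : Treegram X) (t : ℝ) :
    blockMap T (le_refl t) = (id : T.blocks t → T.blocks t) := by
  funext B
  apply Subtype.ext
  have h := (T.refines (le_refl t) B.1 B.2).choose_spec
  exact (T.eq_of_subset B.2 h.1 h.2).symm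

lemma blockMap_comp (T : Treegram X) {s t u : ℝ} (hst : s ≤ t) (htu : t ≤ u) :
    blockMap T (le_trans hst htu) = blockMap T htu ∘ blockMap T hst := by
  funext B
  apply Subtype.ext
  have h1 := (T.refines (le_trans hst htu) B.1 B.2).choose_spec
  have h2 := (T.refines hst B.1 B.2).choose_spec
  have h3 := (T.refines htu (blockMap T hst B).1 (blockMap T hst B).2).choose_spec
  show (T.refines (le_trans hst htu) B.1 B.2).choose
      = (T.refines htu (blockMap T hst B).1 (blockMap T hst B).2).choose
  by_contra hne
  have hdisj := T.disjoint' u _ h1.1 _ h3.1 hne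
  obtain ⟨b, hb⟩ := T.nonempty_of_mem s B.1 B.2
  have hmem : b ∈ (T.refines (le_trans hst htu) B.1 B.2).choose
      ∩ (T.refines htu (blockMap T hst B).1 (blockMap T hst B).2).choose :=
    ⟨h1.2 hb, h3.2 (h2.2 hb)⟩
  rw [hdisj] at hmem
  exact hmem

/-- The linearization of a treegram: the functor `ℝ ⥤ Vec_𝔽` assigning to `t` the free
`𝔽`-vector space on the set of blocks at time `t`, with structure maps sending each
block to the block containing it. -/
noncomputable def linearization (T : Treegram X) : ℝ ⥤ ModuleCat.{u} 𝔽 where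
  obj t := ModuleCat.of 𝔽 ((T.blocks t) →₀ 𝔽)
  map {s t} h := ModuleCat.ofHom (Finsupp.lmapDomain 𝔽 𝔽 (blockMap T h.le))
  map_id t := by
    show ModuleCat.ofHom (Finsupp.lmapDomain 𝔽 𝔽 (blockMap T (le_refl t))) = _
    rw [blockMap_id, Finsupp.lmapDomain_id]
    rfl
  map_comp {s t u} hst htu := by
    show ModuleCat.ofHom (Finsupp.lmapDomain 𝔽 𝔽 (blockMap T (le_trans hst.le htu.le))) = _
    rw [blockMap_comp T hst.le htu.le, Finsupp.lmapDomain_comp]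
    rfl

/-- The direct sum `⊕ᵢ I^{J i}` of the interval modules supported on the (convex) subsets
`J i` of a poset `P`, as a functor `P ⥤ Vec_𝔽`. -/
noncomputable def sumIntervalModule {P : Type} [Preorder P]
    {ι : Type u} (J : ι → Set P)
    (hJ : ∀ i, ∀ a ∈ J i, ∀ b ∈ J i, ∀ c, a ≤ c → c ≤ b → c ∈ J i) :
    P ⥤ ModuleCat.{u} 𝔽 where
  obj p := ModuleCat.of 𝔽 (∀ i : ι, PLift (p ∈ J i) → 𝔽)
  map {p q} h :=
    ModuleCat.ofHom <|
    { toFun := fun g i _ => if hp : p ∈ J i then g i ⟨hp⟩ else 0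
      map_add' := by
        intro g₁ g₂
        funext i hq
        show (if hp : p ∈ J i then (g₁ + g₂) i ⟨hp⟩ else 0)
            = (if hp : p ∈ J i then g₁ i ⟨hp⟩ else 0) + (if hp : p ∈ J i then g₂ i ⟨hp⟩ else 0)
        by_cases hp : p ∈ J i
        · simp only [dif_pos hp]; rfl
        · simp only [dif_neg hp]; rw [add_zero]
      map_smul' := by
        intro c g
        funext i hq
        show (if hp : p ∈ J i then (c • g) i ⟨hp⟩ else 0)
            = c • (if hp : p ∈ J i then g i ⟨hp⟩ else 0)
        by_cases hp : p ∈ J i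
        · simp only [dif_pos hp]; rfl
        · simp only [dif_neg hp]; rw [smul_zero] }
  map_id p := by
    refine ModuleCat.hom_ext (LinearMap.ext fun g => ?_)
    funext i hq
    show (if hp : p ∈ J i then g i ⟨hp⟩ else 0) = g i hq
    rw [dif_pos hq.down]
  map_comp {p q r} hpq hqr := by
    refine ModuleCat.hom_ext (LinearMap.ext fun g => ?_)
    funext i hr
    show (if hp : p ∈ J i then g i ⟨hp⟩ else 0)
        = (if hq : q ∈ J i then (if hp : p ∈ J i then g i ⟨hp⟩ else 0) else 0)
    by_cases hp : p ∈ J i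
    · have hq : q ∈ J i := hJ i p hp r hr.down q hpq.le hqr.le
      simp only [dif_pos hp, dif_pos hq]
    · by_cases hq : q ∈ J i
      · simp only [dif_neg hp, dif_pos hq]
      · simp only [dif_neg hp, dif_neg hq]

end linearization


section elderProof

variable {X : Type u} (T : Treegram X)

lemma Treegram.memSet_nonempty (x : X) : {t : ℝ | ∃ B ∈ T.blocks t, x ∈ B}.Nonempty := by
  obtain ⟨T₀, hT₀, hw, he⟩ := T.eventually_whole
  refine ⟨T₀, Set.univ, ?_, trivial⟩
  rw [hw T₀ le_rfl]
  rfl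

lemma Treegram.memSet_bddBelow (x : X) : BddBelow {t : ℝ | ∃ B ∈ T.blocks t, x ∈ B} := by
  obtain ⟨T₀, hT₀, hw, he⟩ := T.eventually_whole
  refine ⟨-T₀, fun s hs => ?_⟩
  by_contra hc
  push_neg at hc
  obtain ⟨B, hB, -⟩ := hs
  rw [he s hc.le] at hB
  exact hB

lemma birth_le_of_mem {t : ℝ} {x : X} {B : Set X} (hB : B ∈ T.blocks t) (hx : x ∈ B) :
    birth T x ≤ t := csInf_le (T.memSet_bddBelow x) ⟨B, hB, hx⟩

lemma exists_block {x : X} {t : ℝ} (h : birth T x ≤ t) : ∃ B ∈ T.blocks t, x ∈ B := by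
  obtain ⟨δ, hδ, hc⟩ := T.right_constant (birth T x)
  have hlt : sInf {t : ℝ | ∃ B ∈ T.blocks t, x ∈ B} < birth T x + δ := lt_add_of_pos_right _ hδ
  obtain ⟨a, haS, hal⟩ := (csInf_lt_iff (T.memSet_bddBelow x) (T.memSet_nonempty x)).mp hlt
  have hba : birth T x ≤ a := csInf_le (T.memSet_bddBelow x) haS
  obtain ⟨B, hB, hxB⟩ := haS
  rw [hc a hba hal.le] at hB
  obtain ⟨C, hC, hBC⟩ := T.refines h B hB
  exact ⟨C, hC, hBC hxB⟩

lemma block_unique {t : ℝ} {B C : Set X} (hB : B ∈ T.blocks t) (hC : C ∈ T.blocks t)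
    {x : X} (hxB : x ∈ B) (hxC : x ∈ C) : B = C := by
  by_contra hne
  have hmem : x ∈ B ∩ C := ⟨hxB, hxC⟩
  rw [T.disjoint' t B hB C hC hne] at hmem
  exact hmem

noncomputable def blk (x : X) {t : ℝ} (h : birth T x ≤ t) : T.blocks t :=
  ⟨(exists_block T h).choose, (exists_block T h).choose_spec.1⟩

lemma mem_blk (x : X) {t : ℝ} (h : birth T x ≤ t) : x ∈ (blk T x h : Set X) :=
  (exists_block T h).choose_spec.2

lemma blk_eq {x : X} {t : ℝ} (h : birth T x ≤ t) {B : Set X} (hB : B ∈ T.blocks t)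
    (hx : x ∈ B) : (blk T x h : Set X) = B :=
  block_unique T (blk T x h).2 hB (mem_blk T x h) hx

lemma blockMap_blk {x : X} {s t : ℝ} (hst : s ≤ t) (h : birth T x ≤ s) :
    blockMap T hst (blk T x h) = blk T x (h.trans hst) := by
  have h1 := (T.refines hst (blk T x h).1 (blk T x h).2).choose_spec
  apply Subtype.ext
  exact block_unique T (blockMap T hst (blk T x h)).2 (blk T x (h.trans hst)).2
    (h1.2 (mem_blk T x h)) (mem_blk T x _)

section withOrder

variable [LinearOrder X] [Fintype X]

lemma least_of_lt_death {t : ℝ} {x : X} (hd : (t : EReal) < death T x)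
    {B : Set X} (hB : B ∈ T.blocks t) (hx : x ∈ B) : ∀ y ∈ B, x ≤ y := by
  unfold death at hd
  obtain ⟨e, he, hte⟩ := lt_sSup_iff.mp hd
  obtain ⟨s, rfl, hbs, hleast⟩ := he
  have hts : t ≤ s := (EReal.coe_lt_coe_iff.mp hte).le
  obtain ⟨C, hC, hBC⟩ := T.refines hts B hB
  intro y hy
  exact hleast C hC (hBC hx) y (hBC hy)

lemma lt_death_of_least {t : ℝ} {x : X} {B : Set X} (hB : B ∈ T.blocks t) (hx : x ∈ B)
    (hl : ∀ y ∈ B, x ≤ y) : (t : EReal) < death T x := by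
  obtain ⟨δ, hδ, hc⟩ := T.right_constant t
  have hmem : ((t + δ : ℝ) : EReal) ∈ {e : EReal | ∃ s : ℝ, e = (s : EReal) ∧ birth T x ≤ s ∧
      ∀ B ∈ T.blocks s, x ∈ B → ∀ y ∈ B, x ≤ y} := by
    refine ⟨t + δ, rfl, (birth_le_of_mem T hB hx).trans (by linarith), ?_⟩
    intro C hC hxC y hy
    rw [hc (t + δ) (by linarith) le_rfl] at hC
    have hCB := block_unique T hC hB hxC hx
    exact hl y (hCB ▸ hy)
  have hle : ((t + δ : ℝ) : EReal) ≤ death T x := le_sSup hmem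
  have hlt : ((t : ℝ) : EReal) < ((t + δ : ℝ) : EReal) := by
    exact_mod_cast (by linarith : t < t + δ)
  exact lt_of_lt_of_le hlt hle

/-- The elder-sibling specification: `x` merges at its death time into a block containing a
smaller, earlier-born element `y` that lives strictly longer. -/
def Espec (x : X) : Prop :=
  ∃ y : X, y < x ∧ birth T y ≤ birth T x ∧ death T x < death T y ∧
    ∃ B ∈ T.blocks ((death T x).toReal), x ∈ B ∧ y ∈ B

lemma espec_of (hcompat : ∀ x y : X, birth T x < birth T y → x < y)
    {t : ℝ} {x : X} (h1 : birth T x ≤ t) (h2 : (t : EReal) < death T x)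
    (hne : death T x ≠ ⊤) : Espec T x := by
  have hbot : death T x ≠ ⊥ := ((EReal.bot_lt_coe t).trans h2).ne'
  have hd : ((death T x).toReal : EReal) = death T x := EReal.coe_toReal hne hbot
  have htd : t < (death T x).toReal := by
    rw [← hd] at h2
    exact_mod_cast h2
  obtain ⟨B, hB, hxB⟩ := exists_block T (h1.trans htd.le)
  have hnl : ¬ ∀ y ∈ B, x ≤ y := by
    intro hl
    have hlt := lt_death_of_least T hB hxB hl
    rw [hd] at hlt
    exact lt_irrefl _ hlt
  push_neg at hnl
  obtain ⟨z, hzB, hzx⟩ := hnl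
  obtain ⟨y, hyB, hyl⟩ := Set.exists_min_image B id (Set.toFinite B) ⟨x, hxB⟩
  have hyx : y < x := lt_of_le_of_lt (hyl z hzB) hzx
  refine ⟨y, hyx, ?_, ?_, B, hB, hxB, hyB⟩
  · by_contra hby
    exact asymm hyx (hcompat x y (lt_of_not_ge hby))
  · have hlt := lt_death_of_least T hB hyB (fun b hb => hyl b hb)
    rw [hd] at hlt
    exact hlt

variable (𝔽 : Type u) [Field 𝔽]

noncomputable def wv (t : ℝ) (x : X) (h1 : birth T x ≤ t) : (T.blocks t →₀ 𝔽) :=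
  Finsupp.single (blk T x h1) 1 -
    if h : Espec T x then
      Finsupp.single (blk T h.choose (h.choose_spec.2.1.trans h1)) 1 else 0

noncomputable def Psi (t : ℝ) :
    (∀ x : X, PLift (birth T x ≤ t ∧ (t : EReal) < death T x) → 𝔽) →ₗ[𝔽]
      (T.blocks t →₀ 𝔽) where
  toFun g := ∑ x : X, if h : birth T x ≤ t ∧ (t : EReal) < death T x
      then g x ⟨h⟩ • wv T 𝔽 t x h.1 else 0
  map_add' g₁ g₂ := by
    rw [← Finset.sum_add_distrib]
    refine Finset.sum_congr rfl fun x _ => ?_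
    by_cases h : birth T x ≤ t ∧ (t : EReal) < death T x
    · rw [dif_pos h, dif_pos h, dif_pos h]
      show (g₁ x ⟨h⟩ + g₂ x ⟨h⟩) • _ = _
      rw [add_smul]
    · rw [dif_neg h, dif_neg h, dif_neg h, add_zero]
  map_smul' c g := by
    rw [RingHom.id_apply, Finset.smul_sum]
    refine Finset.sum_congr rfl fun x _ => ?_
    by_cases h : birth T x ≤ t ∧ (t : EReal) < death T x
    · rw [dif_pos h, dif_pos h]
      show (c * g x ⟨h⟩) • _ = c • _
      rw [mul_smul]
    · rw [dif_neg h, dif_neg h, smul_zero]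

lemma Psi_apply (t : ℝ) (g) : Psi T 𝔽 t g = ∑ x : X,
    if h : birth T x ≤ t ∧ (t : EReal) < death T x
      then g x ⟨h⟩ • wv T 𝔽 t x h.1 else 0 := rfl

lemma Psi_natural (hcompat : ∀ x y : X, birth T x < birth T y → x < y)
    {s t : ℝ} (hst : s ≤ t)
    (g : ∀ x : X, PLift (birth T x ≤ s ∧ (s : EReal) < death T x) → 𝔽) :
    Finsupp.lmapDomain 𝔽 𝔽 (blockMap T hst) (Psi T 𝔽 s g) =
      Psi T 𝔽 t (fun x _ => if hp : birth T x ≤ s ∧ (s : EReal) < death T x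
        then g x ⟨hp⟩ else 0) := by
  rw [Psi_apply, Psi_apply, map_sum]
  refine Finset.sum_congr rfl fun x _ => ?_
  by_cases hs : birth T x ≤ s ∧ (s : EReal) < death T x
  · rw [dif_pos hs, map_smul]
    by_cases ht : birth T x ≤ t ∧ (t : EReal) < death T x
    · rw [dif_pos ht, dif_pos hs]
      congr 1
      unfold wv
      rw [map_sub, Finsupp.lmapDomain_apply, Finsupp.mapDomain_single, blockMap_blk]
      congr 1
      by_cases hE : Espec T x
      · rw [dif_pos hE, dif_pos hE, Finsupp.lmapDomain_apply, Finsupp.mapDomain_single,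
          blockMap_blk]
      · rw [dif_neg hE, dif_neg hE, map_zero]
    · rw [dif_neg ht]
      have hdt : death T x ≤ (t : EReal) := by
        by_contra hlt
        exact ht ⟨hs.1.trans hst, lt_of_not_ge hlt⟩
      have hne : death T x ≠ ⊤ := by
        intro h
        rw [h] at hdt
        exact absurd hdt (by simp)
      have hE := espec_of T hcompat hs.1 hs.2 hne
      obtain ⟨hyx, hby, hdy, B, hB, hxB, hyB⟩ := hE.choose_spec
      have hbot : death T x ≠ ⊥ := ((EReal.bot_lt_coe s).trans hs.2).ne'
      have hdr : ((death T x).toReal : EReal) = death T x := EReal.coe_toReal hne hbot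
      have hdt' : (death T x).toReal ≤ t := by
        rw [← hdr] at hdt
        exact_mod_cast hdt
      obtain ⟨C, hC, hBC⟩ := T.refines hdt' B hB
      unfold wv
      rw [dif_pos hE, map_sub, Finsupp.lmapDomain_apply, Finsupp.lmapDomain_apply,
        Finsupp.mapDomain_single, Finsupp.mapDomain_single, blockMap_blk, blockMap_blk]
      have e1 : blk T x (hs.1.trans hst) = (⟨C, hC⟩ : T.blocks t) :=
        Subtype.ext (blk_eq T _ hC (hBC hxB))
      have e2 : blk T hE.choose ((hE.choose_spec.2.1.trans hs.1).trans hst)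
          = (⟨C, hC⟩ : T.blocks t) :=
        Subtype.ext (blk_eq T _ hC (hBC hyB))
      rw [e1, e2, sub_self, smul_zero]
  · rw [dif_neg hs, map_zero]
    by_cases ht : birth T x ≤ t ∧ (t : EReal) < death T x
    · rw [dif_pos ht, dif_neg hs, zero_smul]
    · rw [dif_neg ht]

lemma Psi_surjective (hcompat : ∀ x y : X, birth T x < birth T y → x < y) (t : ℝ) :
    Function.Surjective (Psi T 𝔽 t) := by
  have key : ∀ x : X, ∀ (h1 : birth T x ≤ t) (h2 : (t : EReal) < death T x),
      Finsupp.single (blk T x h1) (1 : 𝔽) ∈ LinearMap.range (Psi T 𝔽 t) := by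
    intro x
    induction x using WellFoundedLT.induction with
    | _ x IH =>
      intro h1 h2
      have hg : Psi T 𝔽 t (fun z _ => if z = x then (1 : 𝔽) else 0) = wv T 𝔽 t x h1 := by
        rw [Psi_apply, Finset.sum_eq_single x]
        · rw [dif_pos ⟨h1, h2⟩]
          show (if x = x then (1 : 𝔽) else 0) • _ = _
          rw [if_pos rfl, one_smul]
        · intro z _ hzx
          by_cases hz : birth T z ≤ t ∧ (t : EReal) < death T z
          · rw [dif_pos hz]
            show (if z = x then (1 : 𝔽) else 0) • _ = _
            rw [if_neg hzx, zero_smul]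
          · rw [dif_neg hz]
        · intro h
          exact absurd (Finset.mem_univ x) h
      by_cases hE : Espec T x
      · obtain ⟨hyx, hby, hdy, -⟩ := hE.choose_spec
        have hmem := IH hE.choose hyx (hby.trans h1) (lt_trans h2 hdy)
        have hsingle : Finsupp.single (blk T x h1) (1 : 𝔽)
            = wv T 𝔽 t x h1
              + Finsupp.single (blk T hE.choose (hE.choose_spec.2.1.trans h1)) 1 := by
          unfold wv
          rw [dif_pos hE, sub_add_cancel]
        rw [hsingle]
        exact add_mem ⟨_, hg⟩ hmem
      · have hsingle : Finsupp.single (blk T x h1) (1 : 𝔽) = wv T 𝔽 t x h1 := by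
          unfold wv
          rw [dif_neg hE, sub_zero]
        rw [hsingle]
        exact ⟨_, hg⟩
  intro f
  induction f using Finsupp.induction_linear with
  | zero => exact ⟨0, map_zero _⟩
  | add f g hf hg =>
    obtain ⟨a, ha⟩ := hf
    obtain ⟨b, hb⟩ := hg
    exact ⟨a + b, by rw [map_add, ha, hb]⟩
  | single B c =>
    obtain ⟨m, hmB, hml⟩ := Set.exists_min_image (B : Set X) id (Set.toFinite _)
      (T.nonempty_of_mem t B B.2)
    have h1 : birth T m ≤ t := birth_le_of_mem T B.2 hmB
    have h2 : (t : EReal) < death T m := lt_death_of_least T B.2 hmB (fun y hy => hml y hy)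
    have hb : blk T m h1 = B := Subtype.ext (blk_eq T h1 B.2 hmB)
    obtain ⟨a, ha⟩ := key m h1 h2
    refine ⟨c • a, ?_⟩
    rw [map_smul, ha, hb, Finsupp.smul_single, smul_eq_mul, mul_one]

lemma aliveBij (t : ℝ) : Function.Bijective
    (fun a : {x : X // birth T x ≤ t ∧ (t : EReal) < death T x} => blk T a.1 a.2.1) := by
  constructor
  · rintro ⟨x, hx⟩ ⟨y, hy⟩ h
    simp only at h
    have hco : (blk T x hx.1 : Set X) = (blk T y hy.1 : Set X) := by rw [h]
    have hxm : x ∈ (blk T y hy.1 : Set X) := hco ▸ mem_blk T x hx.1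
    have hym : y ∈ (blk T x hx.1 : Set X) := hco ▸ mem_blk T y hy.1
    have hxl := least_of_lt_death T hx.2 (blk T x hx.1).2 (mem_blk T x hx.1)
    have hyl := least_of_lt_death T hy.2 (blk T y hy.1).2 (mem_blk T y hy.1)
    exact Subtype.ext (le_antisymm (hxl y hym) (hyl x hxm))
  · intro B
    obtain ⟨m, hmB, hml⟩ := Set.exists_min_image (B : Set X) id (Set.toFinite _)
      (T.nonempty_of_mem t B B.2)
    have h1 : birth T m ≤ t := birth_le_of_mem T B.2 hmB
    have h2 : (t : EReal) < death T m := lt_death_of_least T B.2 hmB (fun y hy => hml y hy)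
    exact ⟨⟨m, h1, h2⟩, Subtype.ext (blk_eq T h1 B.2 hmB)⟩

lemma Psi_injective (hcompat : ∀ x y : X, birth T x < birth T y → x < y) (t : ℝ) :
    Function.Injective (Psi T 𝔽 t) := by
  let e1 : (∀ x : X, PLift (birth T x ≤ t ∧ (t : EReal) < death T x) → 𝔽) ≃ₗ[𝔽]
      ({x : X // birth T x ≤ t ∧ (t : EReal) < death T x} → 𝔽) :=
    { toFun := fun g a => g a.1 ⟨a.2⟩
      invFun := fun h x p => h ⟨x, p.down⟩
      map_add' := fun _ _ => rfl
      map_smul' := fun _ _ => rfl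
      left_inv := fun g => rfl
      right_inv := fun h => rfl }
  let e2 := Finsupp.linearEquivFunOnFinite 𝔽 𝔽 (T.blocks t)
  let e3 := LinearEquiv.funCongrLeft 𝔽 𝔽 (Equiv.ofBijective _ (aliveBij T t))
  let E := (e3.toLinearMap.comp e2.toLinearMap).comp ((Psi T 𝔽 t).comp e1.symm.toLinearMap)
  have hEsurj : Function.Surjective E :=
    e3.surjective.comp (e2.surjective.comp
      ((Psi_surjective T 𝔽 hcompat t).comp e1.symm.surjective))
  have hEinj : Function.Injective E := LinearMap.injective_iff_surjective.mpr hEsurj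
  intro a b hab
  have hE : E (e1 a) = E (e1 b) := by
    show e3 (e2 (Psi T 𝔽 t (e1.symm (e1 a)))) = e3 (e2 (Psi T 𝔽 t (e1.symm (e1 b))))
    rw [e1.symm_apply_apply, e1.symm_apply_apply, hab]
  have := hEinj hE
  exact e1.injective this

end withOrder

end elderProof

/-- **The elder rule for treegrams.**  Let `θ` be a treegram over a nonempty finite set
`X` and `<` a total order on `X` compatible with the birth times.  Then the linearization
`F ∘ θ` is isomorphic, as a functor `ℝ ⥤ Vec_𝔽`, to the direct sum
`⊕_{x ∈ X} I^{[b(x), d(x))}` of interval modules.  (Consequently, for any `ℝ`-indexed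
filtration `K` of a connected finite simplicial complex with `π₀(K) = θ`, the zeroth
persistent homology `H₀(K)` is isomorphic to this direct sum.) -/
theorem linearization_iso_sum_elder_intervals
    (𝔽 : Type u) [Field 𝔽] (X : Type u) [Fintype X] [Nonempty X] [LinearOrder X]
    (T : Treegram X)
    (hcompat : ∀ x y : X, birth T x < birth T y → x < y) :
    Nonempty (linearization 𝔽 T ≅
      sumIntervalModule 𝔽 (fun x : X => {t : ℝ | birth T x ≤ t ∧ (t : EReal) < death T x})
        (fun x a ha b hb c hac hcb =>
          ⟨le_trans ha.1 hac, lt_of_le_of_lt (EReal.coe_le_coe_iff.mpr hcb) hb.2⟩)) := by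
  refine ⟨(NatIso.ofComponents
    (fun t => (LinearEquiv.ofBijective (Psi T 𝔽 t)
        ⟨Psi_injective T 𝔽 hcompat t, Psi_surjective T 𝔽 hcompat t⟩).toModuleIso) ?_).symm⟩
  intro s t h
  apply ModuleCat.hom_ext
  apply LinearMap.ext
  intro g
  show Psi T 𝔽 t _ = Finsupp.lmapDomain 𝔽 𝔽 (blockMap T h.le) (Psi T 𝔽 s g)
  have harg : ((sumIntervalModule 𝔽
      (fun x : X => {t : ℝ | birth T x ≤ t ∧ (t : EReal) < death T x})
      (fun x a ha b hb c hac hcb =>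
        ⟨le_trans ha.1 hac, lt_of_le_of_lt (EReal.coe_le_coe_iff.mpr hcb) hb.2⟩)).map h).hom g
      = fun x _ => if hp : birth T x ≤ s ∧ (s : EReal) < death T x
        then g x ⟨hp⟩ else 0 := by
    funext x p
    show @dite _ (birth T x ≤ s ∧ (s : EReal) < death T x) (Classical.propDecidable _)
        (fun hp => g x ⟨hp⟩) (fun _ => 0) = _
    by_cases hp : birth T x ≤ s ∧ (s : EReal) < death T x
    · rw [dif_pos hp, dif_pos hp]
    · rw [dif_neg hp, dif_neg hp]
  refine (congrArg (Psi T 𝔽 t) harg).trans ?_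
  exact (Psi_natural T 𝔽 hcompat h.le g).symm
end

section
/- Let (X, d_X, f_X) be an augmented metric space satisfying: for all σ₁ ≤ σ₂ in ℝ, all ε ≥ 0, and all x, y ∈ X_{σ₁}, if x and y are ε-connected in X_{σ₂}, then x and y are ε-connected in X_{σ₁}. Let < be a total order on X compatible with f_X and let x ∈ X be non-<-least. Then any <-conqueror x' of x in (X_{f_X(x)}, d_X) is a <-conqueror of x in (X_σ, d_X) for every σ ≥ f_X(x); in particular every non-<-least point of X has a constant conqueror. -/
universe u

section conn

variable {X : Type u} [MetricSpace X]

/-- One step of an `ε`-chain inside `S`. -/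
def chainRel (S : Set X) (ε : ℝ) (a b : X) : Prop :=
  a ∈ S ∧ b ∈ S ∧ dist a b ≤ ε

/-- `x` and `y` are `ε`-connected in `S`: there is a finite chain from `x` to `y` inside `S`
whose consecutive points are at distance at most `ε`. -/
def epsConn (S : Set X) (ε : ℝ) (x y : X) : Prop :=
  x ∈ S ∧ y ∈ S ∧ Relation.ReflTransGen (chainRel S ε) x y

/-- The sublevel set `X_σ` of `f`. -/
def sublevel (f : X → ℝ) (σ : ℝ) : Set X := {x | f x ≤ σ}

lemma epsConn_refl {S : Set X} {ε : ℝ} {x : X} (hx : x ∈ S) : epsConn S ε x x :=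
  ⟨hx, hx, Relation.ReflTransGen.refl⟩

lemma epsConn_symm {S : Set X} {ε : ℝ} {x y : X} (h : epsConn S ε x y) :
    epsConn S ε y x := by
  obtain ⟨hx, hy, hc⟩ := h
  refine ⟨hy, hx, ?_⟩
  have hsym : Symmetric (chainRel S ε) := by
    rintro a b ⟨ha, hb, hd⟩
    exact ⟨hb, ha, by rwa [dist_comm]⟩
  clear hx hy
  induction hc with
  | refl => exact Relation.ReflTransGen.refl
  | tail _ hbc ih => exact Relation.ReflTransGen.head (hsym hbc) ih

lemma epsConn_trans {S : Set X} {ε : ℝ} {x y z : X}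
    (h1 : epsConn S ε x y) (h2 : epsConn S ε y z) : epsConn S ε x z :=
  ⟨h1.1, h2.2.1, h1.2.2.trans h2.2.2⟩

lemma epsConn_mono {f : X → ℝ} {σ σ' ε ε' : ℝ} (hσ : σ ≤ σ') (hε : ε ≤ ε') {x y : X}
    (h : epsConn (sublevel f σ) ε x y) : epsConn (sublevel f σ') ε' x y := by
  obtain ⟨hx, hy, hc⟩ := h
  refine ⟨le_trans hx hσ, le_trans hy hσ, Relation.ReflTransGen.mono ?_ x y hc⟩
  rintro a b ⟨ha, hb, hd⟩
  exact ⟨le_trans ha hσ, le_trans hb hσ, le_trans hd hε⟩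

/-- The `ε`-connectedness class of `x` in the sublevel set `X_σ`. -/
def connClass (f : X → ℝ) (σ ε : ℝ) (x : X) : Set X :=
  {y | epsConn (sublevel f σ) ε x y}

/-- The set of `ε`-connectedness classes of the sublevel set `X_σ` (empty when `ε < 0`). -/
def classes (f : X → ℝ) (σ ε : ℝ) : Set (Set X) :=
  {C | 0 ≤ ε ∧ ∃ x, f x ≤ σ ∧ C = connClass f σ ε x}

lemma connClass_eq {f : X → ℝ} {σ ε : ℝ} {x y : X}
    (h : epsConn (sublevel f σ) ε x y) : connClass f σ ε x = connClass f σ ε y := by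
  ext z
  exact ⟨fun hz => epsConn_trans (epsConn_symm h) hz, fun hz => epsConn_trans h hz⟩

end conn

section conqueror

variable {X : Type u} [MetricSpace X]

/-- `u^σ(x, y)`: the minimal `ε ≥ 0` such that `x` and `y` are `ε`-connected in `X_σ`. -/
noncomputable def uConn (f : X → ℝ) (σ : ℝ) (x y : X) : ℝ :=
  sInf {ε : ℝ | 0 ≤ ε ∧ epsConn (sublevel f σ) ε x y}

variable [LinearOrder X]

/-- `x'` is a `<`-conqueror of `x` in `(X_σ, d_X)`. -/
def IsConqueror (f : X → ℝ) (σ : ℝ) (x x' : X) : Prop :=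
  x' < x ∧ ∀ x'', x'' < x → uConn f σ x x' ≤ uConn f σ x x''

end conqueror

/-- **Injective horizontal maps give constant conquerors.**  Let `(X, d_X, f)` be an
augmented metric space such that for all `σ₁ ≤ σ₂`, all `ε ≥ 0` and all
`x, y ∈ X_{σ₁}`, if `x` and `y` are `ε`-connected in `X_{σ₂}` then they are `ε`-connected
in `X_{σ₁}`.  Let `<` be a total order on `X` compatible with `f` and let `x ∈ X` be
non-least.  Then any `<`-conqueror `x'` of `x` in `(X_{f x}, d_X)` is a `<`-conqueror of
`x` in `(X_σ, d_X)` for every `σ ≥ f x`; in particular every non-least point of `X` has a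
constant conqueror. -/
theorem isConqueror_of_injective_horizontal_maps
    (X : Type u) [Fintype X] [MetricSpace X] [LinearOrder X] (f : X → ℝ)
    (hinjmaps : ∀ σ₁ σ₂ : ℝ, σ₁ ≤ σ₂ → ∀ ε : ℝ, 0 ≤ ε → ∀ x y : X,
      x ∈ sublevel f σ₁ → y ∈ sublevel f σ₁ →
      epsConn (sublevel f σ₂) ε x y → epsConn (sublevel f σ₁) ε x y)
    (hcompat : ∀ x y : X, f x < f y → x < y)
    (x : X) (hx : ∃ y, y < x) (x' : X) (hconq : IsConqueror f (f x) x x') :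
    ∀ σ : ℝ, f x ≤ σ → IsConqueror f σ x x' := by
  intro σ hσ
  obtain ⟨hlt, hmin⟩ := hconq
  have hfle : ∀ y : X, y < x → f y ≤ f x := fun y hy =>
    le_of_not_gt (fun h => absurd (hcompat x y h) (not_lt_of_gt hy))
  have key : ∀ y : X, f y ≤ f x → uConn f σ x y = uConn f (f x) x y := by
    intro y hy
    unfold uConn
    congr 1
    ext ε
    constructor
    · rintro ⟨hε, hc⟩
      exact ⟨hε, hinjmaps (f x) σ hσ ε hε x y (le_refl (f x)) hy hc⟩
    · rintro ⟨hε, hc⟩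
      exact ⟨hε, epsConn_mono hσ le_rfl hc⟩
  refine ⟨hlt, fun x'' hx'' => ?_⟩
  rw [key x' (hfle x' hlt), key x'' (hfle x'' hx'')]
  exact hmin x'' hx''
end
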